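/- arXiv:2103.16555 — 2 statements merged into one kernel-verified Lean document; each statement's English description precedes it below -/
import Mathlib

section
/- Identity for the averaged nonlinearity error: for φ ∈ C¹([0,T], Σ^m) with m ≥ 2, F(s/ε², φ(s)) - F_av(φ(s)) = ε² ∂_s(∫₀^{s/ε²}(F(τ,φ(s)) - F_av(φ(s)))dτ) - ε² ∫₀^{s/ε²} ∂_s(F(τ,φ(s)) - F_av(φ(s)))dτ, and consequently ‖∫₀^t (F(s/ε², φ(s)) - F_av(φ(s)))ds‖_{L²} ≲ ε²(1+t) sup_{s∈[0,t]}(‖φ(s)‖_{Σ^m}^{2σ+1} + ‖φ(s)‖_{Σ^m}^{2σ}‖∂_s φ(s)‖_{Σ^m}). -/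
/-!
With `Φ(s) = ∫₀^{s/ε²} K(τ,s) dτ`, the Leibniz rule (the primitive in `τ` has continuous partial
derivatives, hence is strictly differentiable jointly) gives
`Φ'(s) = ε⁻² K(s/ε², s) + ∫₀^{s/ε²} K'(τ,s) dτ`, which is the identity. Integrating it over
`[0,t]` writes `∫₀ᵗ K(s/ε², s) ds` as `ε² Φ(t)` minus `ε²` times the integral of the primitives
of `K'`. Both `K(·,s)` and `K'(·,s)` are `2π/b`-periodic with zero mean, so their primitives are
periodic and hence bounded by the period times the sup norm; the Moser-type bounds then give the
estimate.
-/

open MeasureTheory Set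
open ContinuousLinearMap (toSpanSingleton)

theorem Function.Periodic.norm_intervalIntegral_le_of_norm_le {X : Type*}
    [NormedAddCommGroup X] [NormedSpace ℝ X] {f : ℝ → X} {T M : ℝ}
    (hf : Function.Periodic f T) (hT : 0 < T) (hfc : Continuous f)
    (hmean : ∫ τ in (0:ℝ)..T, f τ = 0) (hM : ∀ τ, ‖f τ‖ ≤ M) (r : ℝ) :
    ‖∫ τ in (0:ℝ)..r, f τ‖ ≤ T * M := by
  have hprim : Function.Periodic (fun r => ∫ τ in (0:ℝ)..r, f τ) T := fun r => by
    simpa [hmean] using hf.intervalIntegral_add_eq_add 0 r fun _ _ => hfc.intervalIntegrable _ _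
  obtain ⟨y, ⟨hy₀, hyT⟩, hy⟩ := hprim.exists_mem_Ico₀ hT r
  calc ‖∫ τ in (0:ℝ)..r, f τ‖ = ‖∫ τ in (0:ℝ)..y, f τ‖ := congrArg norm hy
    _ ≤ M * |y - 0| := intervalIntegral.norm_integral_le_of_norm_le_const fun τ _ => hM τ
    _ ≤ T * M := by
      rw [sub_zero, abs_of_nonneg hy₀, mul_comm]
      exact mul_le_mul_of_nonneg_right hyT.le ((norm_nonneg _).trans (hM 0))

section ParametricIntegral

variable {X : Type*} [NormedAddCommGroup X] [NormedSpace ℝ X] {K K' : ℝ → ℝ → X}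

theorem hasDerivAt_intervalIntegral_of_continuous_deriv
    (hK : Continuous fun q : ℝ × ℝ => K q.1 q.2)
    (hKK' : ∀ τ s, HasDerivAt (K τ ·) (K' τ s) s)
    (hK' : Continuous fun q : ℝ × ℝ => K' q.1 q.2) (a c s₀ : ℝ) :
    HasDerivAt (fun s => ∫ τ in a..c, K τ s) (∫ τ in a..c, K' τ s₀) s₀ := by
  obtain ⟨M, hM⟩ := (isCompact_uIcc.prod (isCompact_closedBall s₀ 1)).exists_bound_of_continuousOn
    hK'.continuousOn
  exact (intervalIntegral.hasDerivAt_integral_of_dominated_loc_of_deriv_le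
    (F := fun s τ => K τ s) (bound := fun _ => M) (Metric.ball_mem_nhds s₀ one_pos)
    (.of_forall fun s => (hK.comp (.prodMk_left s)).aestronglyMeasurable)
    ((hK.comp (.prodMk_left s₀)).intervalIntegrable a c)
    (hK'.comp (.prodMk_left s₀)).aestronglyMeasurable
    (.of_forall fun τ hτ s hs =>
      hM (τ, s) ⟨uIoc_subset_uIcc hτ, Metric.ball_subset_closedBall hs⟩)
    intervalIntegrable_const (.of_forall fun τ _ s _ => hKK' τ s)).2

theorem periodic_of_hasDerivAt_param {T : ℝ} (hKK' : ∀ τ s, HasDerivAt (K τ ·) (K' τ s) s)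
    (hper : ∀ s, Function.Periodic (K · s) T) (s : ℝ) : Function.Periodic (K' · s) T :=
  fun τ => (hKK' (τ + T) s).unique (by simpa only [hper _ τ] using hKK' τ s)

theorem intervalIntegral_deriv_param_eq_zero
    (hK : Continuous fun q : ℝ × ℝ => K q.1 q.2)
    (hKK' : ∀ τ s, HasDerivAt (K τ ·) (K' τ s) s)
    (hK' : Continuous fun q : ℝ × ℝ => K' q.1 q.2) {a c : ℝ}
    (hmean : ∀ s, ∫ τ in a..c, K τ s = 0) (s : ℝ) : ∫ τ in a..c, K' τ s = 0 :=
  (hasDerivAt_intervalIntegral_of_continuous_deriv hK hKK' hK' a c s).unique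
    (by simpa only [hmean] using hasDerivAt_const s (0 : X))

variable [CompleteSpace X]

theorem hasStrictFDerivAt_primitive_param
    (hK : Continuous fun q : ℝ × ℝ => K q.1 q.2)
    (hKK' : ∀ τ s, HasDerivAt (K τ ·) (K' τ s) s)
    (hK' : Continuous fun q : ℝ × ℝ => K' q.1 q.2) (q : ℝ × ℝ) :
    HasStrictFDerivAt (fun p : ℝ × ℝ => ∫ τ in (0:ℝ)..p.1, K τ p.2)
      ((toSpanSingleton ℝ (K q.1 q.2)).coprod
        (toSpanSingleton ℝ (∫ τ in (0:ℝ)..q.1, K' τ q.2))) q := by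
  have hK'int : Continuous fun p : ℝ × ℝ => ∫ τ in (0:ℝ)..p.1, K' τ p.2 :=
    intervalIntegral.continuous_parametric_intervalIntegral_of_continuous
      (f := fun (p : ℝ × ℝ) τ => K' τ p.2)
      (hK'.comp (continuous_snd.prodMk (continuous_snd.comp continuous_fst))) continuous_fst
  have hspan := (ContinuousLinearMap.toSpanSingletonLIE ℝ X).continuous
  refine hasStrictFDerivAt_uncurry_coprod (f := fun u s => ∫ τ in (0:ℝ)..u, K τ s)
    (f₁ := fun u s => toSpanSingleton ℝ (K u s))
    (f₂ := fun u s => toSpanSingleton ℝ (∫ τ in (0:ℝ)..u, K' τ s))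
    (.of_forall fun p => ?_) (.of_forall fun p => ?_)
    (hspan.comp hK).continuousAt (hspan.comp hK'int).continuousAt
  · exact ((hK.comp (.prodMk_left p.2)).integral_hasStrictDerivAt 0 p.1).hasDerivAt.hasFDerivAt
  · exact (hasDerivAt_intervalIntegral_of_continuous_deriv hK hKK' hK' 0 p.1 p.2).hasFDerivAt

theorem hasDerivAt_intervalIntegral_param_comp
    (hK : Continuous fun q : ℝ × ℝ => K q.1 q.2)
    (hKK' : ∀ τ s, HasDerivAt (K τ ·) (K' τ s) s)
    (hK' : Continuous fun q : ℝ × ℝ => K' q.1 q.2) {v : ℝ → ℝ} {v' s : ℝ}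
    (hv : HasDerivAt v v' s) :
    HasDerivAt (fun r => ∫ τ in (0:ℝ)..v r, K τ r)
      (v' • K (v s) s + ∫ τ in (0:ℝ)..v s, K' τ s) s := by
  simpa [Function.comp_def] using
    (hasStrictFDerivAt_primitive_param hK hKK' hK' (v s, s)).hasFDerivAt.comp_hasDerivAt
      (f := fun r => (v r, r)) s (hv.prodMk (hasDerivAt_id' s))

theorem eq_smul_deriv_sub_smul_intervalIntegral
    (hK : Continuous fun q : ℝ × ℝ => K q.1 q.2)
    (hKK' : ∀ τ s, HasDerivAt (K τ ·) (K' τ s) s)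
    (hK' : Continuous fun q : ℝ × ℝ => K' q.1 q.2) {c : ℝ} (hc : c ≠ 0) (s : ℝ) :
    K (s / c) s = c • deriv (fun r => ∫ τ in (0:ℝ)..(r / c), K τ r) s -
      c • ∫ τ in (0:ℝ)..(s / c), K' τ s := by
  rw [(hasDerivAt_intervalIntegral_param_comp hK hKK' hK'
      ((hasDerivAt_id' s).div_const c)).deriv,
    smul_add, one_div, smul_inv_smul₀ hc, add_sub_cancel_right]

theorem intervalIntegral_comp_div_eq
    (hK : Continuous fun q : ℝ × ℝ => K q.1 q.2)
    (hKK' : ∀ τ s, HasDerivAt (K τ ·) (K' τ s) s)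
    (hK' : Continuous fun q : ℝ × ℝ => K' q.1 q.2) {c : ℝ} (hc : c ≠ 0) (t : ℝ) :
    ∫ s in (0:ℝ)..t, K (s / c) s =
      c • (∫ τ in (0:ℝ)..(t / c), K τ t) - c • ∫ s in (0:ℝ)..t, ∫ τ in (0:ℝ)..(s / c), K' τ s := by
  have hdiag : Continuous fun s => K (s / c) s :=
    hK.comp ((continuous_id.div_const c).prodMk continuous_id)
  have hK'int : Continuous fun s => ∫ τ in (0:ℝ)..(s / c), K' τ s :=
    intervalIntegral.continuous_parametric_intervalIntegral_of_continuous
      (f := fun s τ => K' τ s) (hK'.comp continuous_swap) (continuous_id.div_const c)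
  have hFTC := intervalIntegral.integral_eq_sub_of_hasDerivAt
    (fun s _ =>
      hasDerivAt_intervalIntegral_param_comp hK hKK' hK' ((hasDerivAt_id' s).div_const c))
    (((hdiag.const_smul (1 / c)).add hK'int).intervalIntegrable 0 t)
  rw [intervalIntegral.integral_add (f := fun s => (1 / c) • K (s / c) s)
      ((hdiag.const_smul _).intervalIntegrable 0 t) (hK'int.intervalIntegrable 0 t),
    intervalIntegral.integral_smul, zero_div, intervalIntegral.integral_same, sub_zero] at hFTC
  rw [← hFTC, smul_add, one_div, smul_inv_smul₀ hc, add_sub_cancel_right]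

theorem norm_intervalIntegral_comp_div_le
    (hK : Continuous fun q : ℝ × ℝ => K q.1 q.2)
    (hKK' : ∀ τ s, HasDerivAt (K τ ·) (K' τ s) s)
    (hK' : Continuous fun q : ℝ × ℝ => K' q.1 q.2) {c t M : ℝ} (hc : 0 < c) (ht : 0 ≤ t)
    (hprim : ‖∫ τ in (0:ℝ)..(t / c), K τ t‖ ≤ M)
    (hprim' : ∀ s ∈ Icc 0 t, ‖∫ τ in (0:ℝ)..(s / c), K' τ s‖ ≤ M) :
    ‖∫ s in (0:ℝ)..t, K (s / c) s‖ ≤ c * (1 + t) * M := by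
  have hprim'_int : ‖∫ s in (0:ℝ)..t, ∫ τ in (0:ℝ)..(s / c), K' τ s‖ ≤ M * t := by
    simpa [abs_of_nonneg ht] using intervalIntegral.norm_integral_le_of_norm_le_const
      fun s hs => hprim' s (Ioc_subset_Icc_self (uIoc_of_le ht ▸ hs))
  calc ‖∫ s in (0:ℝ)..t, K (s / c) s‖
      ≤ c * ‖∫ τ in (0:ℝ)..(t / c), K τ t‖ +
          c * ‖∫ s in (0:ℝ)..t, ∫ τ in (0:ℝ)..(s / c), K' τ s‖ := by
        rw [intervalIntegral_comp_div_eq hK hKK' hK' hc.ne']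
        refine (norm_sub_le _ _).trans_eq ?_
        rw [norm_smul, norm_smul, Real.norm_of_nonneg hc.le]
    _ ≤ c * M + c * (M * t) := by gcongr
    _ = c * (1 + t) * M := by ring

end ParametricIntegral

/-- Averaging identity and estimate for the nonlinearity error (Section 5): with
`K(τ,s) = F(τ,φ(s)) - F_av(φ(s))` (`2π/b`-periodic in `τ` with zero average,
`C¹` in `s` with derivative `K'`), `Nφ s`, `N∂ s` standing for `‖φ(s)‖_{Σ^m}` and
`‖∂_s φ(s)‖_{Σ^m}`, and the Moser-type bounds `‖K(τ,s)‖ ≤ C₀ Nφ(s)^{2σ+1}`,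
`‖K'(τ,s)‖ ≤ C₀ Nφ(s)^{2σ} N∂(s)`, one has the identity
`K(s/ε²,s) = ε² ∂_s(∫₀^{s/ε²} K(τ,s)dτ) - ε² ∫₀^{s/ε²} K'(τ,s)dτ` and consequently
`‖∫₀^t K(s/ε²,s)ds‖ ≲ ε²(1+t) sup_{s∈[0,t]}(Nφ^{2σ+1} + Nφ^{2σ}N∂)`. -/
theorem averaged_nonlinearity_error {X : Type*} [NormedAddCommGroup X] [NormedSpace ℝ X]
    [CompleteSpace X] (b : ℝ) (hb : 0 < b) (σ : ℕ) (C₀ : ℝ) (hC₀ : 0 < C₀) :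
    ∃ C > 0, ∀ (K K' : ℝ → ℝ → X) (Nphi Nd : ℝ → ℝ) (B t eps : ℝ),
      (∀ s, Function.Periodic (fun τ => K τ s) (2 * Real.pi / b)) →
      (∀ s, ∫ τ in (0:ℝ)..(2 * Real.pi / b), K τ s = 0) →
      Continuous (fun q : ℝ × ℝ => K q.1 q.2) →
      (∀ τ s, HasDerivAt (fun r => K τ r) (K' τ s) s) →
      Continuous (fun q : ℝ × ℝ => K' q.1 q.2) →
      (∀ s, 0 ≤ Nphi s) → (∀ s, 0 ≤ Nd s) →
      (∀ τ s, ‖K τ s‖ ≤ C₀ * Nphi s ^ (2 * σ + 1)) →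
      (∀ τ s, ‖K' τ s‖ ≤ C₀ * Nphi s ^ (2 * σ) * Nd s) →
      (∀ s ∈ Set.Icc (0:ℝ) t, Nphi s ^ (2 * σ + 1) + Nphi s ^ (2 * σ) * Nd s ≤ B) →
      0 < eps → 0 ≤ t →
      (∀ s : ℝ, K (s / eps ^ 2) s =
          eps ^ 2 • deriv (fun r => ∫ τ in (0:ℝ)..(r / eps ^ 2), K τ r) s -
            eps ^ 2 • ∫ τ in (0:ℝ)..(s / eps ^ 2), K' τ s) ∧
      ‖∫ s in (0:ℝ)..t, K (s / eps ^ 2) s‖ ≤ C * eps ^ 2 * (1 + t) * B := by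
  set T := 2 * Real.pi / b
  have hT : 0 < T := by positivity
  refine ⟨T * C₀, by positivity, ?_⟩
  intro K K' Nphi Nd B t eps hper hmean hK hKK' hK' hNphi hNd hKC₀ hK'C₀ hB heps ht
  have heps2 : 0 < eps ^ 2 := by positivity
  have hprim : ‖∫ τ in (0:ℝ)..(t / eps ^ 2), K τ t‖ ≤ T * (C₀ * B) := by
    refine ((hper t).norm_intervalIntegral_le_of_norm_le hT (hK.comp (.prodMk_left t))
      (hmean t) (fun τ => hKC₀ τ t) _).trans ?_
    gcongr
    nlinarith [hB t ⟨ht, le_rfl⟩, pow_nonneg (hNphi t) (2 * σ), hNd t]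
  have hprim' : ∀ s ∈ Icc 0 t, ‖∫ τ in (0:ℝ)..(s / eps ^ 2), K' τ s‖ ≤ T * (C₀ * B) := by
    intro s hs
    refine ((periodic_of_hasDerivAt_param hKK' hper s).norm_intervalIntegral_le_of_norm_le hT
      (hK'.comp (.prodMk_left s)) (intervalIntegral_deriv_param_eq_zero hK hKK' hK' hmean s)
      (fun τ => hK'C₀ τ s) _).trans ?_
    rw [mul_assoc C₀]
    gcongr
    nlinarith [hB s hs, pow_nonneg (hNphi s) (2 * σ + 1)]
  refine ⟨eq_smul_deriv_sub_smul_intervalIntegral hK hKK' hK' heps2.ne', ?_⟩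
  calc _ ≤ eps ^ 2 * (1 + t) * (T * (C₀ * B)) :=
        norm_intervalIntegral_comp_div_le hK hKK' hK' heps2 ht hprim hprim'
    _ = T * C₀ * eps ^ 2 * (1 + t) * B := by ring
end

section
/- Invariance of eigenspaces under the averaged nonlinearity: let P_n be the orthogonal projection onto χ_n in the x-variable and φ = P_n φ (i.e. φ(x,y) = α(y)χ_n(x)). Then P_n^⊥ F_av(φ) = 0 and F_av(φ) = ‖χ_n‖_{L^{2σ+2}}^{2σ+2} |α(y)|^{2σ} α(y) χ_n(x). -/
/-!
Since `χ_n` is an eigenfunction, `e^{-iθH}(αχ_n) = e^{-iθE_n}αχ_n`, so the nonlinearity is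
`e^{-iθE_n}|α|^{2σ}α χ_n^{2σ+1}`. Applying `e^{iθH}` multiplies its `m`-th Hermite coefficient by
`e^{iθ(E_m - E_n)} = e^{ibθ(m - n)}`, and the average over the period `2π/b` kills every mode
`m ≠ n`; absolute summability of the coefficients lets the average pass through the series.
Orthonormality of the `χ_n` reduces, through `χ_n(x) ∝ He_n(√(2b)x)e^{-bx²/2}` with `He_n` the
probabilists' Hermite polynomial, to `∫ He_m He_n e^{-x²/2} = n!√(2π)δ_{mn}`; since
`He_{n+1} = X He_n - He_n'`, `n` integrations by parts turn `∫ p He_n e^{-x²/2}` into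
`∫ p⁽ⁿ⁾ e^{-x²/2}`.
-/

open MeasureTheory

/-- The physicists' Hermite polynomial. -/
noncomputable def physHermite (n : ℕ) (z : ℝ) : ℝ :=
  (-1) ^ n * Real.exp (z ^ 2) * iteratedDeriv n (fun t => Real.exp (-t ^ 2)) z

/-- The `n`-th L²-normalized Hermite eigenfunction of `H = -(1/2)∂ₓ² + (1/2)b²x²`. -/
noncomputable def hermiteFun (b : ℝ) (n : ℕ) (x : ℝ) : ℝ :=
  (Real.sqrt (2 ^ n * n.factorial))⁻¹ * (b / Real.pi) ^ ((1 : ℝ) / 4) *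
    Real.exp (-(b * x ^ 2) / 2) * physHermite n (Real.sqrt b * x)

open Polynomial Real

lemma physHermite_eq_aeval_hermite (n : ℕ) (z : ℝ) :
    physHermite n z = √2 ^ n * aeval (√2 * z) (hermite n) := by
  have hgauss : (fun t : ℝ => exp (-t ^ 2)) = fun t => exp (-((√2 * t) ^ 2 / 2)) := by
    ext t; rw [mul_pow, sq_sqrt zero_le_two]; ring_nf
  have hexp : exp (z ^ 2) * exp (-((√2 * z) ^ 2 / 2)) = 1 := by
    rw [← exp_add, mul_pow, sq_sqrt zero_le_two]; simp
  rw [physHermite, hgauss,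
    iteratedDeriv_comp_const_mul (f := fun y => exp (-(y ^ 2 / 2))) (by fun_prop),
    iteratedDeriv_eq_iterate]
  dsimp only
  rw [deriv_gaussian_eq_hermite_mul_gaussian]
  have hsign : ((-1 : ℝ) ^ n) ^ 2 = 1 := by rw [← pow_mul, pow_mul']; simp
  linear_combination (√2 ^ n * aeval (√2 * z) (hermite n) * ((-1 : ℝ) ^ n) ^ 2) * hexp
    + (√2 ^ n * aeval (√2 * z) (hermite n)) * hsign

lemma integrable_aeval_mul_gaussian (p : ℤ[X]) :
    Integrable fun x : ℝ => aeval x p * exp (-(x ^ 2 / 2)) := by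
  simp_rw [aeval_eq_sum_range, Finset.sum_mul]
  refine integrable_finsetSum _ fun i _ => ?_
  have h := integrable_rpow_mul_exp_neg_mul_sq (b := 1 / 2) one_half_pos
    (s := (i : ℝ)) (neg_one_lt_zero.trans_le (Nat.cast_nonneg i))
  refine (h.const_mul (p.coeff i : ℝ)).congr (Filter.Eventually.of_forall fun x => ?_)
  simp only [rpow_natCast, zsmul_eq_mul]
  ring_nf

lemma integral_aeval_derivative_sub_X_mul_gaussian (q : ℤ[X]) :
    ∫ x : ℝ, aeval x (derivative q - X * q) * exp (-(x ^ 2 / 2)) = 0 := by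
  refine integral_eq_zero_of_hasDerivAt_of_integrable
    (f := fun x => aeval x q * exp (-(x ^ 2 / 2))) (fun x => ?_)
    (integrable_aeval_mul_gaussian _) (integrable_aeval_mul_gaussian q)
  have hg : HasDerivAt (fun x : ℝ => exp (-(x ^ 2 / 2))) (exp (-(x ^ 2 / 2)) * -x) x := by
    convert ((hasDerivAt_pow 2 x).div_const 2).fun_neg.exp using 1; ring
  refine ((q.hasDerivAt_aeval x).mul hg).congr_deriv ?_
  rw [map_sub, map_mul, aeval_X]
  ring

lemma integral_aeval_mul_hermite_mul_gaussian (p : ℤ[X]) (n : ℕ) :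
    ∫ x : ℝ, aeval x (p * hermite n) * exp (-(x ^ 2 / 2)) =
      ∫ x : ℝ, aeval x (derivative^[n] p) * exp (-(x ^ 2 / 2)) := by
  induction n generalizing p with
  | zero => simp
  | succ n ih =>
    have hsplit : (fun x : ℝ => aeval x (p * hermite (n + 1)) * exp (-(x ^ 2 / 2))) = fun x =>
        aeval x (derivative p * hermite n) * exp (-(x ^ 2 / 2)) -
          aeval x (derivative (p * hermite n) - X * (p * hermite n)) * exp (-(x ^ 2 / 2)) := by
      ext x
      rw [← sub_mul, ← map_sub, hermite_succ, derivative_mul]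
      congr 2
      ring
    rw [hsplit, integral_sub (integrable_aeval_mul_gaussian _) (integrable_aeval_mul_gaussian _),
      integral_aeval_derivative_sub_X_mul_gaussian (p * hermite n), sub_zero, ih,
      Function.iterate_succ_apply]

lemma integral_gaussian_half : ∫ x : ℝ, exp (-(x ^ 2 / 2)) = √(2 * π) := by
  convert integral_gaussian (1 / 2) using 3 with x
  · ring_nf
  · ring_nf

lemma iterate_derivative_hermite_self (n : ℕ) :
    derivative^[n] (hermite n) = C (n.factorial : ℤ) := by
  have hdeg : (derivative^[n] (hermite n)).natDegree = 0 := by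
    have := natDegree_iterate_derivative (hermite n) n
    rw [natDegree_hermite] at this
    omega
  rw [eq_C_of_natDegree_eq_zero hdeg, coeff_iterate_derivative, zero_add, coeff_hermite_self,
    Nat.descFactorial_self, nsmul_one]

lemma integral_hermite_mul_hermite_mul_gaussian (m n : ℕ) :
    ∫ x : ℝ, aeval x (hermite m * hermite n) * exp (-(x ^ 2 / 2)) =
      if m = n then n.factorial * √(2 * π) else 0 := by
  wlog hmn : m ≤ n generalizing m n
  · rw [mul_comm, this n m (le_of_not_ge hmn), if_neg (by omega), if_neg (by omega)]
  rw [integral_aeval_mul_hermite_mul_gaussian]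
  rcases hmn.lt_or_eq with hlt | rfl
  · rw [iterate_derivative_eq_zero (by rwa [natDegree_hermite]), if_neg hlt.ne]
    simp
  · simp [iterate_derivative_hermite_self, integral_const_mul, integral_gaussian_half]

lemma hermiteFun_mul_hermiteFun {b : ℝ} (hb : 0 ≤ b) (m n : ℕ) (x : ℝ) :
    hermiteFun b m x * hermiteFun b n x =
      (√(2 ^ m * m.factorial))⁻¹ * (√(2 ^ n * n.factorial))⁻¹ * √(b / π) * √2 ^ (m + n) *
        (aeval (√2 * √b * x) (hermite m * hermite n) * exp (-((√2 * √b * x) ^ 2 / 2))) := by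
  have hroot : (b / π) ^ ((1 : ℝ) / 4) * (b / π) ^ ((1 : ℝ) / 4) = √(b / π) := by
    rw [← rpow_add' (by positivity) (by norm_num), sqrt_eq_rpow]; norm_num
  have hexp : exp (-(b * x ^ 2) / 2) * exp (-(b * x ^ 2) / 2) =
      exp (-((√2 * √b * x) ^ 2 / 2)) := by
    rw [← exp_add, mul_pow, mul_pow, sq_sqrt zero_le_two, sq_sqrt hb]; ring_nf
  simp only [hermiteFun, physHermite_eq_aeval_hermite, map_mul, ← mul_assoc]
  linear_combination
    ((√(2 ^ m * m.factorial))⁻¹ * (√(2 ^ n * n.factorial))⁻¹ * √2 ^ m * √2 ^ n *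
      aeval (√2 * √b * x) (hermite m) * aeval (√2 * √b * x) (hermite n)) *
      (exp (-(b * x ^ 2) / 2) * exp (-(b * x ^ 2) / 2) * hroot + √(b / π) * hexp)

lemma integral_hermiteFun_mul_hermiteFun {b : ℝ} (hb : 0 < b) (m n : ℕ) :
    ∫ x, hermiteFun b m x * hermiteFun b n x = if m = n then 1 else 0 := by
  simp_rw [hermiteFun_mul_hermiteFun hb.le, integral_const_mul]
  rw [Measure.integral_comp_mul_left
    (fun y => aeval y (hermite m * hermite n) * exp (-(y ^ 2 / 2))),
    integral_hermite_mul_hermite_mul_gaussian]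
  split_ifs with hmn
  · subst hmn
    have h2 : (0 : ℝ) < 2 ^ m * m.factorial := by positivity
    rw [smul_eq_mul, abs_of_pos (by positivity), ← two_mul, pow_mul, sq_sqrt zero_le_two,
      ← mul_inv, mul_self_sqrt h2.le, sqrt_div hb.le, sqrt_mul zero_le_two]
    field_simp
  · simp

lemma integral_exp_mul_I_period_of_ne {b : ℝ} (hb : b ≠ 0) {m n : ℕ} (hmn : m ≠ n) :
    ∫ θ in (0 : ℝ)..2 * π / b, Complex.exp (↑(b * ((m : ℝ) - n)) * θ * Complex.I) = 0 := by
  have hfreq : (↑(b * ((m : ℝ) - n)) * Complex.I : ℂ) ≠ 0 := by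
    have : (m : ℝ) - n ≠ 0 := sub_ne_zero.mpr (Nat.cast_injective.ne hmn)
    exact mul_ne_zero (by exact_mod_cast mul_ne_zero hb this) Complex.I_ne_zero
  simp_rw [mul_right_comm _ _ Complex.I]
  rw [integral_exp_mul_complex hfreq]
  have hperiod : (↑(b * ((m : ℝ) - n)) * Complex.I : ℂ) * ↑(2 * π / b) =
      ((m - n : ℤ) : ℂ) * (2 * π * Complex.I) := by
    have hbC : (b : ℂ) ≠ 0 := by exact_mod_cast hb
    push_cast
    field_simp
  rw [hperiod, Complex.exp_int_mul_two_pi_mul_I]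
  simp

lemma intervalIntegral_tsum_mul_exp_mul_I {T : ℝ} (hT : 0 ≤ T) (ω : ℕ → ℝ) {W : ℕ → ℂ}
    (hW : Summable (‖W ·‖)) :
    ∫ θ in (0 : ℝ)..T, ∑' m, W m * Complex.exp (↑(ω m) * θ * Complex.I) =
      ∑' m, ∫ θ in (0 : ℝ)..T, W m * Complex.exp (↑(ω m) * θ * Complex.I) := by
  have hnorm (m : ℕ) (θ : ℝ) : ‖W m * Complex.exp (↑(ω m) * θ * Complex.I)‖ = ‖W m‖ := by
    rw [norm_mul, ← Complex.ofReal_mul, Complex.norm_exp_ofReal_mul_I, mul_one]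
  simp only [intervalIntegral.integral_of_le hT]
  refine (integral_tsum_of_summable_integral_norm (fun m => ?_) ?_).symm
  · exact (Continuous.integrableOn_Ioc (by fun_prop))
  · refine (hW.mul_left T).congr fun m => ?_
    simp only [hnorm]
    simp [hT]

lemma intervalIntegral_tsum_mul_exp_period {b : ℝ} (hb : 0 < b) (n : ℕ) {W : ℕ → ℂ}
    (hW : Summable (‖W ·‖)) :
    ∫ θ in (0 : ℝ)..2 * π / b,
        ∑' m : ℕ, W m * Complex.exp (↑(b * ((m : ℝ) - n)) * θ * Complex.I) =
      ↑(2 * π / b) * W n := by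
  rw [intervalIntegral_tsum_mul_exp_mul_I (by positivity) _ hW, tsum_eq_single n fun m hm => ?_]
  · simp
  · rw [intervalIntegral.integral_const_mul, integral_exp_mul_I_period_of_ne hb.ne' hm, mul_zero]

noncomputable def hermiteCoeff (b : ℝ) (m : ℕ) (f : ℝ → ℂ) : ℂ :=
  ∫ t : ℝ, (hermiteFun b m t : ℂ) * f t

/-- `e^{iθH}`, acting diagonally on the Hermite expansion with eigenvalues `b(m + 1/2)`. -/
noncomputable def hermitePropagator (b θ : ℝ) (f : ℝ → ℂ) (x : ℝ) : ℂ :=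
  ∑' m : ℕ, Complex.exp (Complex.I * (θ : ℂ) * ((b * ((m : ℝ) + 1 / 2) : ℝ) : ℂ)) *
    (hermiteCoeff b m f * (hermiteFun b m x : ℂ))

lemma hermiteCoeff_const_mul_ofReal (b : ℝ) (m : ℕ) (c : ℂ) (g : ℝ → ℝ) :
    hermiteCoeff b m (fun t => c * g t) = c * ↑(∫ t, g t * hermiteFun b m t) := by
  rw [hermiteCoeff, ← integral_complex_ofReal, ← integral_const_mul]
  congr 1 with t
  push_cast
  ring

lemma hermiteCoeff_const_mul_hermiteFun {b : ℝ} (hb : 0 < b) (m n : ℕ) (c : ℂ) :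
    hermiteCoeff b m (fun t => c * hermiteFun b n t) = if m = n then c else 0 := by
  rw [hermiteCoeff_const_mul_ofReal, integral_hermiteFun_mul_hermiteFun hb]
  split_ifs <;> simp_all

lemma hermitePropagator_const_mul_hermiteFun {b : ℝ} (hb : 0 < b) (θ : ℝ) (n : ℕ) (c : ℂ)
    (x : ℝ) :
    hermitePropagator b θ (fun t => c * hermiteFun b n t) x =
      Complex.exp (Complex.I * θ * ↑(b * ((n : ℝ) + 1 / 2))) * (c * hermiteFun b n x) := by
  rw [hermitePropagator, tsum_eq_single n fun m hm => ?_]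
  · rw [hermiteCoeff_const_mul_hermiteFun hb, if_pos rfl]
  · rw [hermiteCoeff_const_mul_hermiteFun hb, if_neg hm, zero_mul, mul_zero]

lemma ofReal_norm_mul_ofReal_pow_mul (z : ℂ) (r : ℝ) (k : ℕ) :
    (‖z * r‖ : ℂ) ^ (2 * k) * (z * r) = (‖z‖ : ℂ) ^ (2 * k) * z * ↑(r ^ (2 * k + 1)) := by
  have habs : ((|r| : ℝ) : ℂ) ^ (2 * k) = (r : ℂ) ^ (2 * k) := by
    norm_cast; exact Even.pow_abs ⟨k, two_mul k⟩ r
  rw [norm_mul, Complex.norm_real, Real.norm_eq_abs, Complex.ofReal_mul, mul_pow, habs]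
  push_cast
  ring

lemma hermitePropagator_nonlinearity_const_mul_hermiteFun {b : ℝ} (hb : 0 < b) (σ n : ℕ) (c : ℂ)
    (θ x : ℝ) :
    hermitePropagator b θ (fun t =>
        (‖hermitePropagator b (-θ) (fun t' => c * hermiteFun b n t') t‖ : ℂ) ^ (2 * σ) *
          hermitePropagator b (-θ) (fun t' => c * hermiteFun b n t') t) x =
      ∑' m : ℕ, (‖c‖ : ℂ) ^ (2 * σ) * c *
          ↑(∫ t, hermiteFun b n t ^ (2 * σ + 1) * hermiteFun b m t) * ↑(hermiteFun b m x) *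
        Complex.exp (↑(b * ((m : ℝ) - n)) * θ * Complex.I) := by
  set z := Complex.exp (Complex.I * ↑(-θ) * ↑(b * ((n : ℝ) + 1 / 2))) * c
  have hz : ‖z‖ = ‖c‖ := by
    rw [norm_mul, show Complex.I * ↑(-θ) * ↑(b * ((n : ℝ) + 1 / 2)) =
      ↑(-θ * (b * ((n : ℝ) + 1 / 2))) * Complex.I by push_cast; ring,
      Complex.norm_exp_ofReal_mul_I, one_mul]
  have hinner (t : ℝ) :
      (‖hermitePropagator b (-θ) (fun t' => c * hermiteFun b n t') t‖ : ℂ) ^ (2 * σ) *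
        hermitePropagator b (-θ) (fun t' => c * hermiteFun b n t') t =
      (‖c‖ : ℂ) ^ (2 * σ) * z * ↑(hermiteFun b n t ^ (2 * σ + 1)) := by
    rw [hermitePropagator_const_mul_hermiteFun hb, ← mul_assoc (Complex.exp _) c,
      ofReal_norm_mul_ofReal_pow_mul, hz]
  have hphase (m : ℕ) : Complex.exp (Complex.I * θ * ↑(b * ((m : ℝ) + 1 / 2))) *
      Complex.exp (Complex.I * ↑(-θ) * ↑(b * ((n : ℝ) + 1 / 2))) =
      Complex.exp (↑(b * ((m : ℝ) - n)) * θ * Complex.I) := by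
    rw [← Complex.exp_add]; push_cast; ring_nf
  simp only [hinner]
  refine tsum_congr fun m => ?_
  rw [hermiteCoeff_const_mul_ofReal]
  linear_combination (‖c‖ : ℂ) ^ (2 * σ) * c *
    ↑(∫ t, hermiteFun b n t ^ (2 * σ + 1) * hermiteFun b m t) * ↑(hermiteFun b m x) * hphase m

/-- Invariance of eigenspaces under the averaged nonlinearity (Corollary 1.3 / Section 7):
for `φ(x,y) = α(y)χ_n(x)`, with `U θ = e^{iθH}` given spectrally through the Hermite
eigenbasis, the averaged nonlinearity
`F_av(φ) = (b/2π)∫₀^{2π/b} e^{iθH}(|e^{-iθH}φ|^{2σ} e^{-iθH}φ)dθ` satisfies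
`P_n^⊥ F_av(φ) = 0` and `F_av(φ) = ‖χ_n‖_{L^{2σ+2}}^{2σ+2} |α(y)|^{2σ} α(y) χ_n(x)`. -/
theorem eigenspace_invariance (b : ℝ) (hb : 0 < b) (σ n : ℕ) (α : ℝ → ℂ)
    (U : ℝ → (ℝ → ℂ) → (ℝ → ℂ))
    (hU : ∀ (θ : ℝ) (f : ℝ → ℂ) (x : ℝ), U θ f x = ∑' m : ℕ,
      Complex.exp (Complex.I * (θ : ℂ) * ((b * ((m : ℝ) + 1 / 2) : ℝ) : ℂ)) *
        ((∫ t : ℝ, (hermiteFun b m t : ℂ) * f t) * (hermiteFun b m x : ℂ)))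
    (hsum : ∀ x : ℝ, Summable (fun m : ℕ =>
      |∫ t : ℝ, hermiteFun b n t ^ (2 * σ + 1) * hermiteFun b m t| * |hermiteFun b m x|))
    (y : ℝ) :
    ∃ F : ℝ → ℂ,
      (∀ x : ℝ, F x = ((b / (2 * Real.pi) : ℝ) : ℂ) *
        ∫ θ in (0:ℝ)..(2 * Real.pi / b),
          U θ (fun t => (‖U (-θ) (fun t' => α y * (hermiteFun b n t' : ℂ)) t‖ : ℂ) ^ (2 * σ) *
            U (-θ) (fun t' => α y * (hermiteFun b n t' : ℂ)) t) x) ∧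
      (∀ x : ℝ, F x - (∫ t : ℝ, (hermiteFun b n t : ℂ) * F t) * (hermiteFun b n x : ℂ) = 0) ∧
      (∀ x : ℝ, F x = ((∫ t : ℝ, hermiteFun b n t ^ (2 * σ + 2) : ℝ) : ℂ) *
        (‖α y‖ : ℂ) ^ (2 * σ) * α y * (hermiteFun b n x : ℂ)) := by
  obtain rfl : U = hermitePropagator b :=
    funext fun θ => funext fun f => funext fun x => hU θ f x
  set A : ℂ :=
    ((∫ t : ℝ, hermiteFun b n t ^ (2 * σ + 2) : ℝ) : ℂ) * (‖α y‖ : ℂ) ^ (2 * σ) * α y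
  refine ⟨fun x => A * hermiteFun b n x, fun x => ?_, fun x => ?_, fun x => rfl⟩
  · have hW : Summable fun m : ℕ => ‖(‖α y‖ : ℂ) ^ (2 * σ) * α y *
        ↑(∫ t, hermiteFun b n t ^ (2 * σ + 1) * hermiteFun b m t) * ↑(hermiteFun b m x)‖ := by
      refine ((hsum x).mul_left (‖α y‖ ^ (2 * σ) * ‖α y‖)).congr fun m => ?_
      simp only [norm_mul, norm_pow, Complex.norm_real, Complex.norm_of_nonneg (norm_nonneg _),
        Real.norm_eq_abs]
      ring
    simp only [hermitePropagator_nonlinearity_const_mul_hermiteFun hb]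
    rw [intervalIntegral_tsum_mul_exp_period hb n hW, ← mul_assoc, ← Complex.ofReal_mul,
      div_mul_div_cancel₀ (by positivity), div_self hb.ne', Complex.ofReal_one, one_mul]
    simp only [A, ← pow_succ]
    ring
  · show A * _ - hermiteCoeff b n (fun t => A * hermiteFun b n t) * _ = 0
    rw [hermiteCoeff_const_mul_hermiteFun hb, if_pos rfl, sub_self]
end
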